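/- Let L be a co-Heyting algebra, p a prime filter of L and n a natural number. If there exists a strictly increasing chain p_n ⊊ p_{n-1} ⊊ ⋯ ⊊ p_0 = p of prime filters of L, then p contains an element b with codim b ≥ n. -/

import Mathlib

/-- A prime filter of a bounded lattice: upward closed, closed under `⊓`,
contains `⊤`, does not contain `⊥`, and prime with respect to `⊔`. -/
def IsPrimeFilter {L : Type*} [Lattice L] [BoundedOrder L] (p : Set L) : Prop :=
  (∀ x ∈ p, ∀ y : L, x ≤ y → y ∈ p) ∧
  (∀ x ∈ p, ∀ y ∈ p, x ⊓ y ∈ p) ∧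
  (⊤ : L) ∈ p ∧ (⊥ : L) ∉ p ∧
  ∀ x y : L, x ⊔ y ∈ p → x ∈ p ∨ y ∈ p

/-- `dim a ≥ n`: there is a strictly increasing chain `p 0 ⊊ p 1 ⊊ ⋯ ⊊ p n`
of prime filters with `a ∈ p 0`. -/
def DimGE {L : Type*} [Lattice L] [BoundedOrder L] (a : L) (n : ℕ) : Prop :=
  ∃ p : Fin (n + 1) → Set L, (∀ i, IsPrimeFilter (p i)) ∧
    (∀ i j : Fin (n + 1), i < j → p i ⊂ p j) ∧ a ∈ p 0

/-- `codim a ≥ n`: every prime filter `p` containing `a` admits a strictly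
increasing chain `q n ⊊ ⋯ ⊊ q 1 ⊊ q 0 = p` of prime filters. -/
def CodimGE {L : Type*} [Lattice L] [BoundedOrder L] (a : L) (n : ℕ) : Prop :=
  ∀ p : Set L, IsPrimeFilter p → a ∈ p →
    ∃ q : Fin (n + 1) → Set L, (∀ i, IsPrimeFilter (q i)) ∧
      (∀ i j : Fin (n + 1), i < j → q j ⊂ q i) ∧ q 0 = p

/-- The strong order: `b ≪ a` iff for every `c`, `a ≤ b ⊔ c` implies `a ≤ c`. -/
def StrongBelow {L : Type*} [Lattice L] (b a : L) : Prop :=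
  ∀ c : L, a ≤ b ⊔ c → a ≤ c

/-!
Induction on `n`. If `B ∈ p₁` has codimension at least `n` and `u ∈ p₀ \ p₁`, then
`b := u ⊓ (B \ u)` lies in `p₀`, and every prime filter `r ∋ b` contains a smaller prime
filter `r' ∋ B`: separate `B` from the ideal generated by `u` and `rᶜ` (it is not in it,
because `B ≤ u ⊔ j` gives `B \ u ≤ j`) by a prime ideal `J`, and take `r' := Jᶜ`.
Prepending `r` to a chain of length `n` below `r'` gives one of length `n + 1` below `r`.
-/

open Order

section

variable {L : Type*}

namespace IsPrimeFilter

section Lattice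

variable [Lattice L] [BoundedOrder L] {r : Set L}

theorem mem_of_le (hr : IsPrimeFilter r) {x y : L} (hx : x ∈ r) (hxy : x ≤ y) : y ∈ r :=
  hr.1 x hx y hxy

theorem inf_mem (hr : IsPrimeFilter r) {x y : L} (hx : x ∈ r) (hy : y ∈ r) : x ⊓ y ∈ r :=
  hr.2.1 x hx y hy

theorem top_mem (hr : IsPrimeFilter r) : (⊤ : L) ∈ r :=
  hr.2.2.1

theorem bot_notMem (hr : IsPrimeFilter r) : (⊥ : L) ∉ r :=
  hr.2.2.2.1

theorem mem_or_mem (hr : IsPrimeFilter r) {x y : L} (h : x ⊔ y ∈ r) : x ∈ r ∨ y ∈ r :=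
  hr.2.2.2.2 x y h

def complIdeal (hr : IsPrimeFilter r) : Ideal L where
  carrier := rᶜ
  lower' _ _ hxy hy hx := hy (hr.mem_of_le hx hxy)
  nonempty' := ⟨⊥, hr.bot_notMem⟩
  directed' x hx y hy :=
    ⟨x ⊔ y, fun h => (hr.mem_or_mem h).elim hx hy, le_sup_left, le_sup_right⟩

theorem mem_complIdeal (hr : IsPrimeFilter r) {x : L} : x ∈ hr.complIdeal ↔ x ∉ r :=
  Iff.rfl

end Lattice

theorem sdiff_mem [CoheytingAlgebra L] {r : Set L} (hr : IsPrimeFilter r) {b u : L}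
    (hb : b ∈ r) (hu : u ∉ r) : b \ u ∈ r :=
  (hr.mem_or_mem (hr.mem_of_le hb le_sup_sdiff)).resolve_left hu

end IsPrimeFilter

theorem Order.Ideal.IsPrime.isPrimeFilter_compl [Lattice L] [BoundedOrder L] {J : Ideal L}
    (hJ : J.IsPrime) : IsPrimeFilter (J : Set L)ᶜ :=
  ⟨fun _ hx _ hxy hy => hx (J.lower hxy hy),
    fun _ hx _ hy h => (hJ.mem_or_mem h).elim hx hy,
    hJ.top_notMem, fun h => h J.bot_mem,
    fun _ _ h => not_and_or.1 fun hxy => h (J.sup_mem hxy.1 hxy.2)⟩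

theorem exists_isPrimeFilter_disjoint_of_notMem [DistribLattice L] [BoundedOrder L]
    {I : Ideal L} {b : L} (hb : b ∉ I) :
    ∃ r : Set L, IsPrimeFilter r ∧ b ∈ r ∧ Disjoint r I := by
  have hdisj : Disjoint (PFilter.principal b : Set L) I :=
    Set.disjoint_left.2 fun x hx hxI => hb (I.lower (PFilter.mem_principal.1 hx) hxI)
  obtain ⟨J, hJ, hIJ, hJdisj⟩ := DistribLattice.prime_ideal_of_disjoint_filter_ideal hdisj
  refine ⟨(J : Set L)ᶜ, hJ.isPrimeFilter_compl, fun hbJ => ?_, ?_⟩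
  · exact Set.disjoint_left.1 hJdisj (PFilter.mem_principal.2 le_rfl) hbJ
  · exact disjoint_compl_left.mono_right hIJ

theorem IsPrimeFilter.exists_ssubset_of_forall_le_sup [DistribLattice L] [BoundedOrder L]
    {r : Set L} (hr : IsPrimeFilter r) {b u : L} (hu : u ∈ r)
    (hb : ∀ j, b ≤ j ⊔ u → j ∈ r) :
    ∃ r' : Set L, IsPrimeFilter r' ∧ r' ⊂ r ∧ b ∈ r' := by
  set I := hr.complIdeal ⊔ Ideal.principal u
  have hbI : b ∉ I := fun h => by
    obtain ⟨j, hj, hbj⟩ := (Lattice.mem_ideal_sup_principal u b _).1 h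
    exact hj (hb j hbj)
  have hrI : hr.complIdeal ≤ I := le_sup_left
  have huI : u ∈ I := (le_sup_right : Ideal.principal u ≤ I) Ideal.mem_principal_self
  obtain ⟨r', hr', hbr', hdisj⟩ := exists_isPrimeFilter_disjoint_of_notMem hbI
  refine ⟨r', hr', ⟨fun x hx => ?_, fun h => Set.disjoint_left.1 hdisj (h hu) huI⟩, hbr'⟩
  by_contra hxr
  exact Set.disjoint_left.1 hdisj hx (hrI ((hr.mem_complIdeal).2 hxr))

theorem codimGE_zero [Lattice L] [BoundedOrder L] (a : L) : CodimGE a 0 :=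
  fun p hp _ => ⟨![p], Fin.cases hp finZeroElim, fun _ _ hij => strictAnti_vecEmpty hij, rfl⟩

theorem CodimGE.inf_sdiff [CoheytingAlgebra L] {B : L} {n : ℕ} (hB : CodimGE B n) (u : L) :
    CodimGE (u ⊓ B \ u) (n + 1) := by
  intro r hr hbr
  have hu : u ∈ r := hr.mem_of_le hbr inf_le_left
  have hBu : B \ u ∈ r := hr.mem_of_le hbr inf_le_right
  obtain ⟨r', hr', hr'r, hBr'⟩ := hr.exists_ssubset_of_forall_le_sup hu
    fun j hj => hr.mem_of_le hBu (sdiff_le_iff.2 (sup_comm j u ▸ hj))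
  obtain ⟨c, hc, hcanti, hc0⟩ := hB r' hr' hBr'
  have hanti : StrictAnti (Matrix.vecCons r c) :=
    StrictAnti.vecCons (fun i j hij => hcanti i j hij) (hc0 ▸ hr'r)
  exact ⟨Matrix.vecCons r c, Fin.cases hr hc, fun i j hij => hanti hij, rfl⟩

theorem exists_mem_codimGE_of_strictAnti [CoheytingAlgebra L] :
    ∀ (n : ℕ) (q : Fin (n + 1) → Set L), (∀ i, IsPrimeFilter (q i)) → StrictAnti q →
      ∃ b ∈ q 0, CodimGE b n
  | 0, q, hq, _ => ⟨⊤, (hq 0).top_mem, codimGE_zero ⊤⟩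
  | n + 1, q, hq, hanti => by
    obtain ⟨B, hB, hBcodim⟩ := exists_mem_codimGE_of_strictAnti n (Fin.tail q)
      (fun i => hq i.succ) (hanti.comp_strictMono Fin.strictMono_succ)
    obtain ⟨u, hu0, hu1⟩ := Set.exists_of_ssubset (hanti (Fin.succ_pos 0))
    have hBu : B \ u ∈ q 0 := hanti.antitone (Fin.zero_le 1) ((hq 1).sdiff_mem hB hu1)
    exact ⟨u ⊓ B \ u, (hq 0).inf_mem hu0 hBu, hBcodim.inf_sdiff u⟩

end

theorem stmt5_general {L : Type*} [CoheytingAlgebra L] (p : Set L)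
    (n : ℕ) (q : Fin (n + 1) → Set L)
    (hq : ∀ i, IsPrimeFilter (q i))
    (hchain : ∀ i j : Fin (n + 1), i < j → q j ⊂ q i)
    (hq0 : q 0 = p) :
    ∃ b ∈ p, CodimGE b n :=
  hq0 ▸ exists_mem_codimGE_of_strictAnti n q hq fun i j hij => hchain i j hij

theorem stmt5 {L : Type*} [CoheytingAlgebra L] (p : Set L) (hp : IsPrimeFilter p)
    (n : ℕ) (q : Fin (n + 1) → Set L)
    (hq : ∀ i, IsPrimeFilter (q i))
    (hchain : ∀ i j : Fin (n + 1), i < j → q j ⊂ q i)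
    (hq0 : q 0 = p) :
    ∃ b ∈ p, CodimGE b n :=
  stmt5_general p n q hq hchain hq0
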